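/- Let O ⊂ 𝕂^m (𝕂 = ℝ or ℂ) be a formal submanifold and L^1,...,L^l formal vector fields tangent to O such that the values L^1_0,...,L^l_0 at 0 span the tangent space T_0 O. Then every formal vector field tangent to O can be written as a 𝕂[[x]]-linear combination of L^1,...,L^l plus a formal vector field with all coefficients in the ideal I(O). -/

import Mathlib

/-!
Write `I = (F₁, …, F_c)` and let `J` be the Jacobian of `F`, vectors acting on the left. Since
the `dF_s(0)` are independent, `J(0)` has a constant left inverse `T`, and every `ξ ∈ 𝕂^m` is
`(ξ - ξ J(0) T) + ξ J(0) T` with the first summand in `T₀O`, hence a combination of the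
`L^j(0)`. So the matrix with rows `L^1, …, L^l` and the rows of `T` is surjective at `0`, hence
over `𝕂[[x]]`: `L' = Σ a_j L^j + w T`. Applying this to the `F_s`, tangency gives
`w T J ∈ I^c`; as `T J` is `1` at `0` it is invertible, so `w ∈ I^c` and
`L' - Σ a_j L^j = w T` lies in `I^m`.
-/

open MvPowerSeries Finsupp

/-- Formal partial derivative `∂_i` of a multivariate power series. -/
noncomputable def psDeriv {σ K : Type*} [DecidableEq σ] [CommRing K]
    (i : σ) (f : MvPowerSeries σ K) : MvPowerSeries σ K :=
  fun α => ((α i + 1 : ℕ) : K) * MvPowerSeries.coeff (α + Finsupp.single i 1) f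

/-- Application of a formal vector field `L = Σ L_j ∂_j` to a formal power series. -/
noncomputable def vfApply {m : ℕ} {K : Type*} [CommRing K]
    (L : Fin m → MvPowerSeries (Fin m) K) (f : MvPowerSeries (Fin m) K) :
    MvPowerSeries (Fin m) K :=
  ∑ j, L j * psDeriv j f

/-- A formal vector field is tangent to a formal submanifold given by an ideal `I`
if it preserves `I`. -/
def VTangent {m : ℕ} {K : Type*} [CommRing K]
    (L : Fin m → MvPowerSeries (Fin m) K) (I : Ideal (MvPowerSeries (Fin m) K)) : Prop :=
  ∀ f ∈ I, vfApply L f ∈ I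

/-- A manifold ideal of codimension `k`: generated by `k` series vanishing at `0`
with linearly independent differentials at `0`. -/
def IsManifoldIdeal {m : ℕ} {K : Type*} [Field K]
    (I : Ideal (MvPowerSeries (Fin m) K)) (k : ℕ) : Prop :=
  ∃ F : Fin k → MvPowerSeries (Fin m) K,
    I = Ideal.span (Set.range F) ∧
    (∀ j, MvPowerSeries.constantCoeff (F j) = 0) ∧
    LinearIndependent K (fun j => fun i => MvPowerSeries.coeff (Finsupp.single i 1) (F j))

open Matrix

namespace Matrix

variable {p q R : Type*} [Fintype p] [CommRing R] {I : Ideal R}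

theorem vecMul_apply_mem_of_vec_mem (A : Matrix p q R) {v : p → R} (hv : ∀ j, v j ∈ I)
    (i : q) : (v ᵥ* A) i ∈ I :=
  Ideal.sum_mem _ fun j _ => Ideal.mul_mem_right _ _ (hv j)

theorem vecMul_apply_mem_of_entries_mem (v : p → R) {A : Matrix p q R} (hA : ∀ j i, A j i ∈ I)
    (i : q) : (v ᵥ* A) i ∈ I :=
  Ideal.sum_mem _ fun j _ => Ideal.mul_mem_left _ _ (hA j i)

theorem mem_of_vecMul_apply_mem [DecidableEq p] {A : Matrix p p R} (hA : IsUnit A) {v : p → R}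
    (hv : ∀ i, (v ᵥ* A) i ∈ I) (j : p) : v j ∈ I := by
  rw [← vecMul_one v, ← mul_nonsing_inv A ((isUnit_iff_isUnit_det A).mp hA), ← vecMul_vecMul]
  exact vecMul_apply_mem_of_vec_mem _ hv j

theorem exists_mul_eq_one_of_linearIndependent_col {m n K : Type*} [Field K] [Fintype m]
    [Fintype n] [DecidableEq n] {A : Matrix m n K} (h : LinearIndependent K A.col) :
    ∃ T : Matrix n m K, T * A = 1 := by
  refine vecMul_surjective_iff_exists_left_inverse.mp fun y => ?_
  have hrange : LinearMap.range Aᵀ.mulVecLin = ⊤ := by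
    apply Submodule.eq_top_of_finrank_eq
    rw [Module.finrank_fintype_fun_eq_card]
    exact LinearIndependent.rank_matrix (M := Aᵀ) h
  obtain ⟨x, hx⟩ := LinearMap.range_eq_top.mp hrange y
  exact ⟨x, by simpa [mulVec_transpose] using hx⟩

end Matrix

namespace MvPowerSeries

variable {σ R : Type*} [CommRing R]

theorem isUnit_matrix_of_isUnit_map_constantCoeff {p : Type*} [Fintype p] [DecidableEq p]
    {M : Matrix p p (MvPowerSeries σ R)} (h : IsUnit (M.map constantCoeff)) : IsUnit M := by
  rw [isUnit_iff_isUnit_det, isUnit_iff_constantCoeff, RingHom.map_det]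
  exact (isUnit_iff_isUnit_det _).mp h

theorem map_C_map_constantCoeff {p q : Type*} (S : Matrix p q R) :
    (S.map (C (σ := σ))).map constantCoeff = S := by
  rw [Matrix.map_map, ← RingHom.coe_comp, constantCoeff_comp_C, RingHom.coe_id, Matrix.map_id]

theorem vecMul_surjective_of_map_constantCoeff {p q : Type*} [Fintype p] [DecidableEq q]
    [Fintype q] {M : Matrix p q (MvPowerSeries σ R)}
    (h : Function.Surjective (M.map constantCoeff).vecMul) : Function.Surjective M.vecMul := by
  obtain ⟨S, hS⟩ := vecMul_surjective_iff_exists_left_inverse.mp h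
  let S' : Matrix q p (MvPowerSeries σ R) := S.map C
  have hunit : IsUnit (S' * M) := by
    refine isUnit_matrix_of_isUnit_map_constantCoeff ?_
    rw [Matrix.map_mul, map_C_map_constantCoeff, hS]
    exact isUnit_one
  obtain ⟨N, hN⟩ := isUnit_iff_exists_inv'.mp hunit
  exact vecMul_surjective_iff_exists_left_inverse.mpr ⟨N * S', by rw [Matrix.mul_assoc, hN]⟩

theorem coeff_single_one_mul (i : σ) (f g : MvPowerSeries σ R) :
    coeff (single i 1) (f * g) =
      constantCoeff f * coeff (single i 1) g + coeff (single i 1) f * constantCoeff g := by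
  classical
  rw [coeff_mul, antidiagonal_single, Finset.sum_map,
    show (1 : ℕ) = 0 + 1 from rfl, Finset.Nat.antidiagonal_succ, Finset.sum_cons]
  simp [coeff_zero_eq_constantCoeff]

end MvPowerSeries

theorem constantCoeff_psDeriv {σ K : Type*} [DecidableEq σ] [CommRing K] (i : σ)
    (f : MvPowerSeries σ K) : constantCoeff (psDeriv i f) = coeff (single i 1) f := by
  change (((0 : σ →₀ ℕ) i + 1 : ℕ) : K) * coeff (0 + single i 1) f = _
  simp

section FormalSubmanifold

variable {m c : ℕ} {K : Type*}

/-- Stored transposed (rows indexed by the variables), so that `X ᵥ* jacobian F` is the vector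
of the derivatives `X(F s)`. -/
noncomputable def jacobian [CommRing K] (F : Fin c → MvPowerSeries (Fin m) K) :
    Matrix (Fin m) (Fin c) (MvPowerSeries (Fin m) K) :=
  Matrix.of fun i s => psDeriv i (F s)

noncomputable def jacobianAtZero [CommRing K] (F : Fin c → MvPowerSeries (Fin m) K) :
    Matrix (Fin m) (Fin c) K :=
  Matrix.of fun i s => coeff (single i 1) (F s)

theorem vecMul_jacobian [CommRing K] (F : Fin c → MvPowerSeries (Fin m) K)
    (X : Fin m → MvPowerSeries (Fin m) K) (s : Fin c) :
    (X ᵥ* jacobian F) s = vfApply X (F s) :=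
  rfl

theorem jacobian_map_constantCoeff [CommRing K] (F : Fin c → MvPowerSeries (Fin m) K) :
    (jacobian F).map constantCoeff = jacobianAtZero F := by
  ext i s
  exact constantCoeff_psDeriv i (F s)

theorem sum_mul_coeff_single_eq_zero_of_mem_span [CommRing K]
    {F : Fin c → MvPowerSeries (Fin m) K} (hF0 : ∀ s, constantCoeff (F s) = 0)
    {ξ : Fin m → K} (hξ : ξ ᵥ* jacobianAtZero F = 0)
    {f : MvPowerSeries (Fin m) K} (hf : f ∈ Ideal.span (Set.range F)) :
    ∑ i, ξ i * coeff (single i 1) f = 0 := by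
  obtain ⟨g, rfl⟩ := Ideal.mem_span_range_iff_exists_fun.mp hf
  have hξs : ∀ s, ∑ i, ξ i * coeff (single i 1) (F s) = 0 := fun s => congrFun hξ s
  simp only [map_sum, MvPowerSeries.coeff_single_one_mul, hF0, mul_zero, add_zero,
    Finset.mul_sum]
  rw [Finset.sum_comm]
  simp only [mul_left_comm (ξ _), ← Finset.mul_sum, hξs, mul_zero, Finset.sum_const_zero]

variable [Field K] {F : Fin c → MvPowerSeries (Fin m) K} {l : ℕ}

theorem vecMul_fromRows_surjective (hF0 : ∀ s, constantCoeff (F s) = 0)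
    {T : Matrix (Fin c) (Fin m) K} (hT : T * jacobianAtZero F = 1) (L0 : Matrix (Fin l) (Fin m) K)
    (hspan : ∀ ξ : Fin m → K,
      (∀ f ∈ Ideal.span (Set.range F), ∑ i, ξ i * coeff (single i 1) f = 0) →
      ξ ∈ Submodule.span K (Set.range L0)) :
    Function.Surjective (fromRows L0 T).vecMul := by
  intro v
  set w := v ᵥ* jacobianAtZero F
  have hker : (v - w ᵥ* T) ᵥ* jacobianAtZero F = 0 := by
    rw [sub_vecMul, vecMul_vecMul, hT, vecMul_one, sub_self]
  obtain ⟨a, ha⟩ := Submodule.mem_span_range_iff_exists_fun K |>.mp <|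
    hspan _ fun f hf => sum_mul_coeff_single_eq_zero_of_mem_span hF0 hker hf
  refine ⟨Sum.elim a w, ?_⟩
  change Sum.elim a w ᵥ* fromRows L0 T = v
  rw [sumElim_vecMul_fromRows, vecMul_eq_sum, ha, sub_add_cancel]

theorem exists_sub_vecMul_mem_of_vTangent (hF0 : ∀ s, constantCoeff (F s) = 0)
    (hF : LinearIndependent K (jacobianAtZero F).col)
    (L : Matrix (Fin l) (Fin m) (MvPowerSeries (Fin m) K))
    (hLt : ∀ j, VTangent (L j) (Ideal.span (Set.range F)))
    (hspan : ∀ ξ : Fin m → K,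
      (∀ f ∈ Ideal.span (Set.range F), ∑ i, ξ i * coeff (single i 1) f = 0) →
      ξ ∈ Submodule.span K (Set.range (L.map constantCoeff)))
    {X : Fin m → MvPowerSeries (Fin m) K} (hX : VTangent X (Ideal.span (Set.range F))) :
    ∃ a : Fin l → MvPowerSeries (Fin m) K,
      ∀ i, X i - (a ᵥ* L) i ∈ Ideal.span (Set.range F) := by
  set I := Ideal.span (Set.range F)
  have hFI : ∀ s, F s ∈ I := fun s => Ideal.subset_span ⟨s, rfl⟩
  obtain ⟨T, hT⟩ := exists_mul_eq_one_of_linearIndependent_col hF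
  let T' : Matrix (Fin c) (Fin m) (MvPowerSeries (Fin m) K) := T.map C
  have hT' : T'.map constantCoeff = T := MvPowerSeries.map_C_map_constantCoeff T
  obtain ⟨u, hu⟩ : ∃ u, u ᵥ* fromRows L T' = X := by
    refine MvPowerSeries.vecMul_surjective_of_map_constantCoeff ?_ X
    rw [fromRows_map, hT']
    exact vecMul_fromRows_surjective hF0 hT _ hspan
  set a := u ∘ Sum.inl
  set w := u ∘ Sum.inr
  have hwT : w ᵥ* T' = X - a ᵥ* L := by rw [← hu, vecMul_fromRows, add_sub_cancel_left]
  have hunit : IsUnit (T' * jacobian F) := by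
    refine MvPowerSeries.isUnit_matrix_of_isUnit_map_constantCoeff ?_
    rw [Matrix.map_mul, hT', jacobian_map_constantCoeff, hT]
    exact isUnit_one
  have hw : ∀ t, w t ∈ I := by
    refine mem_of_vecMul_apply_mem hunit fun s => ?_
    rw [← vecMul_vecMul, hwT, sub_vecMul, vecMul_vecMul, Pi.sub_apply, vecMul_jacobian]
    exact I.sub_mem (hX _ (hFI s))
      (vecMul_apply_mem_of_entries_mem a (fun j s => hLt j _ (hFI s)) s)
  refine ⟨a, fun i => ?_⟩
  rw [← Pi.sub_apply, ← hwT]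
  exact vecMul_apply_mem_of_vec_mem T' hw i

end FormalSubmanifold

/-- If the values at `0` of tangent vector fields `L^1,…,L^l` span the tangent space `T₀O`,
then every vector field tangent to `O` is a `𝕂[[x]]`-combination of them modulo `I(O)`. -/
theorem stmt_6 {m : ℕ} {𝕂 : Type} [RCLike 𝕂]
    (I : Ideal (MvPowerSeries (Fin m) 𝕂)) (c : ℕ) (hI : IsManifoldIdeal I c)
    (l : ℕ) (L : Fin l → (Fin m → MvPowerSeries (Fin m) 𝕂))
    (hLt : ∀ j, VTangent (L j) I)
    (hspan : ∀ ξ : Fin m → 𝕂,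
      (∀ f ∈ I, ∑ i, ξ i * MvPowerSeries.coeff (Finsupp.single i 1) f = 0) →
      ξ ∈ Submodule.span 𝕂
        (Set.range fun j => fun i => MvPowerSeries.constantCoeff (L j i))) :
    ∀ L' : Fin m → MvPowerSeries (Fin m) 𝕂, VTangent L' I →
      ∃ c' : Fin l → MvPowerSeries (Fin m) 𝕂, ∀ i, L' i - ∑ j, c' j * L j i ∈ I := by
  obtain ⟨F, rfl, hF0, hF⟩ := hI
  intro L' hL'
  exact exists_sub_vecMul_mem_of_vTangent hF0 hF L hLt hspan hL'
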